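/- arXiv:1801.04428 — 2 statements merged into one kernel-verified Lean document; each statement's English description precedes it below -/
import Mathlib

section
/- For every z in the open unit disk, (1/(2π))·∫_𝔻 (|z - ζ|·(1 - |ζ|²)/|1 - z·conj(ζ)|) dσ(ζ) ≤ (in fact equals) (1-|z|²)³·∫_0^1 [(1/(2π))∫_0^{2π} r²(1-r²)/|1 - z̄ r e^{iθ}|⁶ dθ] dr ≤ 1/4. -/
/-! The substitution `ζ = φ_z w` with `φ_z w = (z - w) / (1 - z̄ w)`, an involution of the disk
with `|φ_z' w|² = (1 - |z|²)² / |1 - z̄ w|⁴`, turns the integrand into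
`(1 - |z|²)³ |w| (1 - |w|²) / |1 - z̄ w|⁶`, and polar coordinates give the equality.
For the bound, `|1 - z̄ ζ|² - |z - ζ|² = (1 - |z|²)(1 - |ζ|²) ≥ 0`, so the integrand is at most
`1 - |ζ|²`, whose integral over the disk is `π / 2`. -/

open Real Complex MeasureTheory Set Metric ComplexConjugate

theorem det_restrictScalars_toSpanSingleton (c : ℂ) :
    ((ContinuousLinearMap.toSpanSingleton ℂ c).restrictScalars ℝ).det = normSq c := by
  conv_rhs =>
    rw [← Algebra.norm_complex_apply, ← ContinuousLinearMap.det_toSpanSingleton (𝕜 := ℂ) c]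
  exact LinearMap.det_restrictScalars

theorem Complex.polarCoord_symm_eq_ofReal_mul_exp (p : ℝ × ℝ) :
    Complex.polarCoord.symm p = p.1 * exp (p.2 * I) := by
  simp [exp_mul_I]

theorem polarCoord_target_inter_preimage_ball {R : ℝ} :
    polarCoord.target ∩ Complex.polarCoord.symm ⁻¹' ball 0 R = Ioo 0 R ×ˢ Ioo (-π) π := by
  ext ⟨r, θ⟩
  simp only [mem_inter_iff, mem_prod, mem_preimage, mem_ball_zero_iff, norm_polarCoord_symm,
    mem_Ioo]
  constructor
  · rintro ⟨⟨hr, hθ⟩, hrR⟩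
    exact ⟨⟨hr, by rwa [abs_of_pos hr] at hrR⟩, hθ⟩
  · rintro ⟨⟨hr, hrR⟩, hθ⟩
    exact ⟨⟨hr, hθ⟩, by rwa [abs_of_pos hr]⟩

theorem Function.Periodic.setIntegral_Ioo_neg_pi_pi {E : Type*} [NormedAddCommGroup E]
    [NormedSpace ℝ E] {f : ℝ → E} (hf : Function.Periodic f (2 * π)) :
    ∫ θ in Ioo (-π) π, f θ = ∫ θ in 0..2 * π, f θ := by
  have := hf.intervalIntegral_add_eq (-π) 0
  rw [show -π + 2 * π = π by ring, zero_add] at this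
  rw [← this, intervalIntegral.integral_of_le (by linarith [pi_pos]),
    integral_Ioc_eq_integral_Ioo]

theorem Complex.continuous_polarCoord_symm : Continuous Complex.polarCoord.symm := by
  rw [funext Complex.polarCoord_symm_eq_ofReal_mul_exp]
  fun_prop

theorem integral_ball_eq_integral_polar {E : Type*} [NormedAddCommGroup E] [NormedSpace ℝ E]
    {R : ℝ} (hR : 0 ≤ R) {h : ℂ → E} (hh : ContinuousOn h (closedBall 0 R)) :
    ∫ w in ball (0 : ℂ) R, h w = ∫ r in 0..R, ∫ θ in 0..2 * π, r • h (r * exp (θ * I)) := by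
  set K : ℝ × ℝ → E := fun p ↦ p.1 • h (Complex.polarCoord.symm p)
  have hK : IntegrableOn K (Ioo 0 R ×ˢ Ioo (-π) π) := by
    refine (ContinuousOn.integrableOn_compact (isCompact_Icc.prod isCompact_Icc) ?_).mono_set
      (prod_mono Ioo_subset_Icc_self Ioo_subset_Icc_self)
    refine continuous_fst.continuousOn.smul
      (hh.comp Complex.continuous_polarCoord_symm.continuousOn ?_)
    rintro ⟨r, θ⟩ ⟨hr, -⟩
    simp [abs_of_nonneg hr.1, hr.2]
  have hperiodic (r : ℝ) : Function.Periodic (fun θ ↦ K (r, θ)) (2 * π) := fun θ ↦ by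
    simp only [K, Complex.polarCoord_symm_eq_ofReal_mul_exp, ofReal_add, ofReal_mul, ofReal_ofNat,
      add_mul, Complex.exp_add, exp_two_pi_mul_I, mul_one]
  calc ∫ w in ball (0 : ℂ) R, h w
      = ∫ p in polarCoord.target, (Complex.polarCoord.symm ⁻¹' ball 0 R).indicator K p := by
        simp_rw [← MeasureTheory.integral_indicator measurableSet_ball,
          ← Complex.integral_comp_polarCoord_symm, ← indicator_comp_right, K,
          indicator_smul_apply]
        rfl
    _ = ∫ p in Ioo 0 R ×ˢ Ioo (-π) π, K p := by
        rw [setIntegral_indicator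
            (measurableSet_ball.preimage Complex.continuous_polarCoord_symm.measurable),
          polarCoord_target_inter_preimage_ball]
    _ = ∫ r in Ioo 0 R, ∫ θ in Ioo (-π) π, K (r, θ) := by
        rw [Measure.volume_eq_prod, setIntegral_prod K (by rwa [← Measure.volume_eq_prod])]
    _ = ∫ r in 0..R, ∫ θ in 0..2 * π, K (r, θ) := by
        rw [intervalIntegral.integral_of_le hR, integral_Ioc_eq_integral_Ioo]
        exact setIntegral_congr_fun measurableSet_Ioo fun r _ ↦
          (hperiodic r).setIntegral_Ioo_neg_pi_pi
    _ = _ := by simp only [K, Complex.polarCoord_symm_eq_ofReal_mul_exp]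

theorem integral_image_eq_integral_normSq_deriv_smul {E : Type*} [NormedAddCommGroup E]
    [NormedSpace ℝ E] {s : Set ℂ} {f f' : ℂ → ℂ} (hs : MeasurableSet s)
    (hf : ∀ x ∈ s, HasDerivWithinAt f (f' x) s x) (hinj : InjOn f s) (g : ℂ → E) :
    ∫ x in f '' s, g x = ∫ x in s, normSq (f' x) • g (f x) := by
  rw [integral_image_eq_integral_abs_det_fderiv_smul volume hs
    (fun x hx ↦ (hf x hx).hasFDerivWithinAt.restrictScalars ℝ) hinj g]
  simp_rw [det_restrictScalars_toSpanSingleton, abs_of_nonneg (normSq_nonneg _)]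

theorem norm_one_sub_conj_mul_sq_sub_norm_sub_sq (z w : ℂ) :
    ‖1 - conj z * w‖ ^ 2 - ‖z - w‖ ^ 2 = (1 - ‖z‖ ^ 2) * (1 - ‖w‖ ^ 2) := by
  simp only [Complex.sq_norm, normSq_apply, sub_re, sub_im, mul_re, mul_im, one_re, one_im,
    conj_re, conj_im]
  ring

theorem norm_one_sub_mul_conj (z w : ℂ) : ‖1 - z * conj w‖ = ‖1 - conj z * w‖ := by
  rw [← norm_conj]
  simp

theorem one_sub_conj_mul_self (z : ℂ) : 1 - conj z * z = ((1 - ‖z‖ ^ 2 : ℝ) : ℂ) := by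
  push_cast
  rw [conj_mul']

theorem one_sub_conj_mul_ne_zero {z w : ℂ} (hz : ‖z‖ < 1) (hw : ‖w‖ ≤ 1) :
    1 - conj z * w ≠ 0 := by
  rw [sub_ne_zero]
  refine fun h ↦ (norm_one (α := ℂ)).not_lt ?_
  calc ‖(1 : ℂ)‖ = ‖z‖ * ‖w‖ := by rw [h, norm_mul, norm_conj]
    _ < 1 := by nlinarith [norm_nonneg z, norm_nonneg w]

theorem norm_sub_le_norm_one_sub_conj_mul {z w : ℂ} (hz : ‖z‖ ≤ 1) (hw : ‖w‖ ≤ 1) :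
    ‖z - w‖ ≤ ‖1 - conj z * w‖ := by
  rw [← pow_le_pow_iff_left₀ (norm_nonneg _) (norm_nonneg _) two_ne_zero, ← sub_nonneg,
    norm_one_sub_conj_mul_sq_sub_norm_sub_sq]
  exact mul_nonneg (by nlinarith [norm_nonneg z]) (by nlinarith [norm_nonneg w])

/-- The involution of the unit disk exchanging `0` and `z`. -/
noncomputable def mobius (z w : ℂ) : ℂ := (z - w) / (1 - conj z * w)

section mobius

variable {z w : ℂ}

theorem sub_mobius (hw : 1 - conj z * w ≠ 0) :
    z - mobius z w = w * (1 - conj z * z) / (1 - conj z * w) := by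
  rw [mobius, eq_div_iff hw, sub_mul, div_mul_cancel₀ _ hw]
  ring

theorem one_sub_conj_mul_mobius (hw : 1 - conj z * w ≠ 0) :
    1 - conj z * mobius z w = (1 - conj z * z) / (1 - conj z * w) := by
  rw [mobius, eq_div_iff hw, sub_mul, mul_assoc, div_mul_cancel₀ _ hw]
  ring

theorem one_sub_norm_mobius_sq (hw : 1 - conj z * w ≠ 0) :
    1 - ‖mobius z w‖ ^ 2 = (1 - ‖z‖ ^ 2) * (1 - ‖w‖ ^ 2) / ‖1 - conj z * w‖ ^ 2 := by
  rw [mobius, norm_div, div_pow, ← norm_one_sub_conj_mul_sq_sub_norm_sub_sq,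
    one_sub_div (by positivity)]

theorem norm_mobius_lt_one (hz : ‖z‖ < 1) (hw : ‖w‖ < 1) : ‖mobius z w‖ < 1 := by
  have hpos : 0 < 1 - ‖mobius z w‖ ^ 2 := by
    have := one_sub_conj_mul_ne_zero hz hw.le
    rw [one_sub_norm_mobius_sq this]
    have : 0 < 1 - ‖z‖ ^ 2 := by nlinarith [norm_nonneg z]
    have : 0 < 1 - ‖w‖ ^ 2 := by nlinarith [norm_nonneg w]
    positivity
  nlinarith [norm_nonneg (mobius z w)]

theorem mobius_mobius (hz : ‖z‖ < 1) (hw : 1 - conj z * w ≠ 0) : mobius z (mobius z w) = w := by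
  have hz' : 1 - conj z * z ≠ 0 := one_sub_conj_mul_ne_zero hz hz.le
  rw [mobius, sub_mobius hw, one_sub_conj_mul_mobius hw, div_div_div_cancel_right₀ hw,
    mul_div_cancel_right₀ _ hz']

theorem hasDerivAt_mobius (hw : 1 - conj z * w ≠ 0) :
    HasDerivAt (mobius z) (-(1 - conj z * z) / (1 - conj z * w) ^ 2) w := by
  have h := ((hasDerivAt_id w).const_sub z).div
    (((hasDerivAt_id w).const_mul (conj z)).const_sub 1) hw
  exact h.congr_deriv (by simp only [id]; ring)

theorem injOn_mobius_ball (hz : ‖z‖ < 1) : InjOn (mobius z) (ball 0 1) := by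
  intro w hw w' hw' h
  rw [mem_ball_zero_iff] at hw hw'
  rw [← mobius_mobius hz (one_sub_conj_mul_ne_zero hz hw.le),
    ← mobius_mobius hz (one_sub_conj_mul_ne_zero hz hw'.le), h]

theorem image_mobius_ball (hz : ‖z‖ < 1) : mobius z '' ball 0 1 = ball 0 1 := by
  refine Subset.antisymm ?_ fun w hw ↦ ⟨mobius z w, ?_, ?_⟩
  · rintro _ ⟨w, hw, rfl⟩
    rw [mem_ball_zero_iff] at hw ⊢
    exact norm_mobius_lt_one hz hw
  all_goals rw [mem_ball_zero_iff] at hw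
  · rw [mem_ball_zero_iff]
    exact norm_mobius_lt_one hz hw
  · exact mobius_mobius hz (one_sub_conj_mul_ne_zero hz hw.le)

theorem integral_ball_comp_mobius {E : Type*} [NormedAddCommGroup E] [NormedSpace ℝ E]
    (hz : ‖z‖ < 1) (g : ℂ → E) :
    ∫ ζ in ball 0 1, g ζ =
      ∫ w in ball 0 1, ((1 - ‖z‖ ^ 2) ^ 2 / ‖1 - conj z * w‖ ^ 4) • g (mobius z w) := by
  conv_lhs => rw [← image_mobius_ball hz]
  rw [integral_image_eq_integral_normSq_deriv_smul measurableSet_ball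
    (fun w hw ↦ (hasDerivAt_mobius (one_sub_conj_mul_ne_zero hz
      (mem_ball_zero_iff.mp hw).le)).hasDerivWithinAt) (injOn_mobius_ball hz)]
  congr 1
  ext w
  rw [normSq_eq_norm_sq, norm_div, norm_neg, norm_pow, one_sub_conj_mul_self, norm_real,
    Real.norm_of_nonneg (by nlinarith [norm_nonneg z]), div_pow, ← pow_mul]

end mobius

theorem norm_sub_mul_div_le_one_sub_norm_sq {z ζ : ℂ} (hz : ‖z‖ ≤ 1) (hζ : ‖ζ‖ ≤ 1) :
    ‖z - ζ‖ * (1 - ‖ζ‖ ^ 2) / ‖1 - z * conj ζ‖ ≤ 1 - ‖ζ‖ ^ 2 := by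
  have hζ' : 0 ≤ 1 - ‖ζ‖ ^ 2 := by nlinarith [norm_nonneg ζ]
  rw [norm_one_sub_mul_conj, mul_comm]
  exact div_le_of_le_mul₀ (norm_nonneg _) hζ'
    (mul_le_mul_of_nonneg_left (norm_sub_le_norm_one_sub_conj_mul hz hζ) hζ')

theorem norm_sub_mul_div_comp_mobius {z w : ℂ} (hz : ‖z‖ < 1) (hw : ‖w‖ < 1) :
    (1 - ‖z‖ ^ 2) ^ 2 / ‖1 - conj z * w‖ ^ 4 *
      (‖z - mobius z w‖ * (1 - ‖mobius z w‖ ^ 2) / ‖1 - z * conj (mobius z w)‖) =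
    (1 - ‖z‖ ^ 2) ^ 3 * (‖w‖ * (1 - ‖w‖ ^ 2) / ‖1 - conj z * w‖ ^ 6) := by
  have hw' := one_sub_conj_mul_ne_zero hz hw.le
  have hc : 0 < 1 - ‖z‖ ^ 2 := by nlinarith [norm_nonneg z]
  rw [norm_one_sub_mul_conj, one_sub_conj_mul_mobius hw', sub_mobius hw',
    one_sub_norm_mobius_sq hw', one_sub_conj_mul_self, norm_div, norm_div, norm_mul, norm_real,
    Real.norm_of_nonneg hc.le]
  have : ‖1 - conj z * w‖ ≠ 0 := norm_ne_zero_iff.mpr hw'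
  field_simp

theorem integral_ball_norm_sub_mul_div_eq {z : ℂ} (hz : ‖z‖ < 1) :
    ∫ ζ in ball (0 : ℂ) 1, ‖z - ζ‖ * (1 - ‖ζ‖ ^ 2) / ‖1 - z * conj ζ‖ =
      (1 - ‖z‖ ^ 2) ^ 3 * ∫ r in (0 : ℝ)..1, ∫ θ in (0 : ℝ)..2 * π,
        r ^ 2 * (1 - r ^ 2) / ‖1 - conj z * r * exp (θ * I)‖ ^ 6 := by
  have hcont : ContinuousOn (fun w : ℂ ↦ ‖w‖ * (1 - ‖w‖ ^ 2) / ‖1 - conj z * w‖ ^ 6)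
      (closedBall 0 1) :=
    ContinuousOn.div (by fun_prop) (by fun_prop) fun w hw ↦ pow_ne_zero _
      (norm_ne_zero_iff.mpr (one_sub_conj_mul_ne_zero hz (mem_closedBall_zero_iff.mp hw)))
  rw [integral_ball_comp_mobius hz]
  simp_rw [smul_eq_mul]
  rw [setIntegral_congr_fun measurableSet_ball fun w hw ↦
      norm_sub_mul_div_comp_mobius hz (mem_ball_zero_iff.mp hw),
    integral_const_mul, integral_ball_eq_integral_polar zero_le_one hcont]
  congr 1
  refine intervalIntegral.integral_congr fun r hr ↦ intervalIntegral.integral_congr fun θ _ ↦ ?_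
  have hr : 0 ≤ r := by
    rw [uIcc_of_le zero_le_one] at hr
    exact hr.1
  simp only [smul_eq_mul, norm_mul, norm_real, norm_exp_ofReal_mul_I, Real.norm_of_nonneg hr,
    mul_one, mul_assoc]
  ring

theorem integral_ball_one_sub_norm_sq : ∫ ζ in ball (0 : ℂ) 1, (1 - ‖ζ‖ ^ 2) = π / 2 := by
  rw [integral_ball_eq_integral_polar zero_le_one (by fun_prop)]
  have h (r θ : ℝ) : r • (1 - ‖(r : ℂ) * exp (θ * I)‖ ^ 2) = r - r ^ 3 := by
    rw [smul_eq_mul, norm_mul, norm_real, norm_exp_ofReal_mul_I, mul_one, Real.norm_eq_abs, sq_abs]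
    ring
  simp_rw [h, intervalIntegral.integral_const, smul_eq_mul]
  rw [intervalIntegral.integral_const_mul, intervalIntegral.integral_sub
    intervalIntegral.intervalIntegrable_id
    ((continuous_pow 3).intervalIntegrable 0 1), integral_id, integral_pow]
  ring

theorem integral_ball_norm_sub_mul_div_le {z : ℂ} (hz : ‖z‖ ≤ 1) :
    ∫ ζ in ball (0 : ℂ) 1, ‖z - ζ‖ * (1 - ‖ζ‖ ^ 2) / ‖1 - z * conj ζ‖ ≤ π / 2 := by
  rw [← integral_ball_one_sub_norm_sq]
  have hsq : ∀ ζ ∈ ball (0 : ℂ) 1, 0 ≤ 1 - ‖ζ‖ ^ 2 := fun ζ hζ ↦ by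
    nlinarith [mem_ball_zero_iff.mp hζ, norm_nonneg ζ]
  refine integral_mono_of_nonneg ?_ ?_ ?_
  · exact ae_restrict_of_forall_mem measurableSet_ball fun ζ hζ ↦
      div_nonneg (mul_nonneg (norm_nonneg _) (hsq ζ hζ)) (norm_nonneg _)
  · exact ((Continuous.continuousOn (by fun_prop)).integrableOn_compact
      (isCompact_closedBall 0 1)).mono_set ball_subset_closedBall
  · exact ae_restrict_of_forall_mem measurableSet_ball fun ζ hζ ↦
      norm_sub_mul_div_le_one_sub_norm_sq hz (mem_ball_zero_iff.mp hζ).le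

theorem integral_I4_bound (z : ℂ) (hz : ‖z‖ < 1) :
    (1 / (2 * Real.pi)) * (∫ ζ in Metric.ball (0 : ℂ) 1,
        ‖z - ζ‖ * (1 - ‖ζ‖ ^ 2) / ‖1 - z * (starRingEnd ℂ) ζ‖)
      = (1 - ‖z‖ ^ 2) ^ 3 * ∫ r in (0 : ℝ)..1,
          (1 / (2 * Real.pi)) * ∫ θ in (0 : ℝ)..(2 * Real.pi),
            r ^ 2 * (1 - r ^ 2)
              / (‖1 - (starRingEnd ℂ) z * (r : ℂ) * Complex.exp ((θ : ℂ) * Complex.I)‖) ^ 6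
    ∧ (1 - ‖z‖ ^ 2) ^ 3 * (∫ r in (0 : ℝ)..1,
          (1 / (2 * Real.pi)) * ∫ θ in (0 : ℝ)..(2 * Real.pi),
            r ^ 2 * (1 - r ^ 2)
              / (‖1 - (starRingEnd ℂ) z * (r : ℂ) * Complex.exp ((θ : ℂ) * Complex.I)‖) ^ 6)
        ≤ 1 / 4 := by
  have hmean := congrArg (1 / (2 * π) * ·) (integral_ball_norm_sub_mul_div_eq hz)
  rw [mul_left_comm (1 / (2 * π)), ← intervalIntegral.integral_const_mul (1 / (2 * π))] at hmean
  refine ⟨hmean, hmean ▸ ?_⟩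
  calc _ ≤ 1 / (2 * π) * (π / 2) := by
        gcongr
        exact integral_ball_norm_sub_mul_div_le hz.le
    _ = 1 / 4 := by field_simp; ring
end

section
/- For all real z₀ ∈ [0,1) and r ∈ [0,1], ∫_0^1 [(1/(2π))·∫_0^{2π} r²(1-r²)/|1 - z₀ r e^{iθ}|⁶ dθ] dr ≤ 1/(4(1-z₀²)³). -/
/-!
Expanding `1 / (1 - w) ^ 3 = ∑ C(n+2, 2) wⁿ` on the circle `w = a e^{iθ}` and applying
Parseval, the mean of `|1 - a e^{iθ}|⁻⁶` is `∑ C(n+2, 2)² |a|^{2n}`. With `a = z₀ r`,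
integrating termwise against `r² (1 - r²)` produces the moments `2 / ((2n+3)(2n+5))`, and
`8 C(n+2, 2) ≤ (2n+3)(2n+5)` bounds the n-th term by `C(n+2, 2) z₀^{2n} / 4`, which sums to
`1 / (4 (1 - z₀²)³)`.
-/

open Real Complex intervalIntegral ComplexConjugate
open scoped Interval

theorem hasSum_intervalIntegral_of_norm_le {ι E : Type*} [Countable ι] [NormedAddCommGroup E]
    [NormedSpace ℝ E] {F : ι → ℝ → E} {f : ℝ → E} {u : ι → ℝ} {a b : ℝ}
    (hF : ∀ i, Continuous (F i)) (hu : Summable u) (hFu : ∀ i, ∀ t ∈ Ι a b, ‖F i t‖ ≤ u i)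
    (hf : ∀ t ∈ Ι a b, HasSum (fun i => F i t) (f t)) :
    HasSum (fun i => ∫ t in a..b, F i t) (∫ t in a..b, f t) :=
  hasSum_integral_of_dominated_convergence (fun i _ => u i)
    (fun i => (hF i).aestronglyMeasurable) (fun i => .of_forall (hFu i))
    (.of_forall fun _ _ => hu) intervalIntegrable_const (.of_forall hf)

theorem integral_exp_nat_mul_I_mul_conj (n m : ℕ) :
    ∫ θ in (0 : ℝ)..2 * π, exp (n * θ * I) * conj (exp (m * θ * I)) =
      if n = m then (2 * π : ℂ) else 0 := by
  have hexp : ∀ θ : ℝ, exp (n * θ * I) * conj (exp (m * θ * I)) =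
      exp (((n : ℤ) - m : ℤ) * I * θ) := fun θ => by
    rw [← exp_conj, ← Complex.exp_add]
    simp only [map_mul, conj_ofReal, conj_I, map_natCast]
    push_cast
    ring_nf
  simp_rw [hexp]
  split_ifs with hnm
  · simp [hnm]
  · have hk : ((n : ℤ) - m : ℤ) ≠ 0 := sub_ne_zero.mpr (mod_cast hnm)
    rw [integral_exp_mul_complex (mul_ne_zero (mod_cast hk) I_ne_zero)]
    have h2π : ((((n : ℤ) - m : ℤ) : ℂ) * I * ((2 * π : ℝ) : ℂ)) =
        (((n : ℤ) - m : ℤ) : ℂ) * (2 * π * I) := by push_cast; ring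
    rw [h2π, exp_int_mul_two_pi_mul_I]
    simp

theorem hasSum_integral_norm_tsum_mul_exp_sq {b : ℕ → ℂ} (hb : Summable fun n => ‖b n‖) :
    HasSum (fun n => 2 * π * ‖b n‖ ^ 2)
      (∫ θ in (0 : ℝ)..2 * π, ‖∑' n, b n * exp (n * θ * I)‖ ^ 2) := by
  set e : ℕ → ℝ → ℂ := fun n θ => b n * exp (n * θ * I)
  have he_norm (n : ℕ) (θ : ℝ) : ‖e n θ‖ = ‖b n‖ := by
    rw [norm_mul, show (n : ℂ) * θ * I = ((n * θ : ℝ) : ℂ) * I by push_cast; ring,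
      norm_exp_ofReal_mul_I, mul_one]
  have he_summable (θ : ℝ) : Summable fun n => ‖e n θ‖ := by simpa only [he_norm] using hb
  have hprod (θ : ℝ) : HasSum (fun p : ℕ × ℕ => e p.1 θ * conj (e p.2 θ))
      (‖∑' n, e n θ‖ ^ 2 : ℝ) := by
    have hconj : Summable fun n => ‖conj (e n θ)‖ := by
      simpa only [RCLike.norm_conj] using he_summable θ
    push_cast
    rw [← mul_conj', conj_tsum, tsum_mul_tsum_of_summable_norm (he_summable θ) hconj]
    exact (summable_mul_of_summable_norm (he_summable θ) hconj).hasSum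
  have hsum : HasSum (fun p : ℕ × ℕ => ∫ θ in (0 : ℝ)..2 * π, e p.1 θ * conj (e p.2 θ))
      (∫ θ in (0 : ℝ)..2 * π, ((‖∑' n, e n θ‖ ^ 2 : ℝ) : ℂ)) :=
    hasSum_intervalIntegral_of_norm_le (fun p => by fun_prop)
      (summable_mul_of_summable_norm (f := fun n => ‖b n‖) (g := fun n => ‖b n‖)
        (by simpa only [norm_norm] using hb) (by simpa only [norm_norm] using hb))
      (fun p θ _ => by rw [norm_mul, RCLike.norm_conj, he_norm, he_norm]) (fun θ _ => hprod θ)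
  have hterm (p : ℕ × ℕ) : ∫ θ in (0 : ℝ)..2 * π, e p.1 θ * conj (e p.2 θ) =
      b p.1 * conj (b p.2) * if p.1 = p.2 then (2 * π : ℂ) else 0 := by
    rw [← integral_exp_nat_mul_I_mul_conj, ← intervalIntegral.integral_const_mul]
    congr 1 with θ
    simp only [e, map_mul]
    ring
  have hdiag : Function.Injective fun n : ℕ => (n, n) := fun _ _ h => congrArg Prod.fst h
  rw [← hdiag.hasSum_iff] at hsum
  · simp only [Function.comp_def, hterm, if_true, e, intervalIntegral.integral_ofReal] at hsum
    rw [← Complex.hasSum_ofReal]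
    convert hsum using 2 with n
    push_cast
    rw [mul_conj']
    ring
  · rintro ⟨n, m⟩ hnm
    have : n ≠ m := fun h => hnm ⟨n, by rw [h]⟩
    rw [hterm, if_neg this, mul_zero]

theorem hasSum_integral_inv_norm_one_sub_mul_exp_pow {a : ℂ} (ha : ‖a‖ < 1) (k : ℕ) :
    HasSum (fun n => 2 * π * ((n + k).choose k * ‖a‖ ^ n) ^ 2)
      (∫ θ in (0 : ℝ)..2 * π, 1 / ‖1 - a * exp (θ * I)‖ ^ (2 * (k + 1))) := by
  set b : ℕ → ℂ := fun n => (n + k).choose k * a ^ n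
  have hb_norm (n : ℕ) : ‖b n‖ = (n + k).choose k * ‖a‖ ^ n := by simp [b]
  have hb : Summable fun n => ‖b n‖ := by
    simpa only [hb_norm] using
      summable_choose_mul_geometric_of_norm_lt_one k (by rwa [norm_norm] : ‖‖a‖‖ < 1)
  have hseries (θ : ℝ) :
      ∑' n, b n * exp (n * θ * I) = 1 / (1 - a * exp (θ * I)) ^ (k + 1) := by
    have hnorm : ‖a * exp (θ * I)‖ < 1 := by rwa [norm_mul, norm_exp_ofReal_mul_I, mul_one]
    rw [← tsum_choose_mul_geometric_of_norm_lt_one k hnorm]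
    congr 1 with n
    rw [mul_pow, ← Complex.exp_nat_mul]
    simp only [b]
    ring_nf
  convert hasSum_integral_norm_tsum_mul_exp_sq hb using 1
  · simp only [hb_norm]
  · congr 1 with θ
    rw [hseries, norm_div, norm_one, norm_pow, div_pow, one_pow, ← pow_mul, mul_comm 2]

theorem integral_sq_mul_one_sub_sq_mul_pow (n : ℕ) :
    ∫ r in (0 : ℝ)..1, r ^ 2 * (1 - r ^ 2) * r ^ (2 * n) =
      2 / ((2 * n + 3) * (2 * n + 5) : ℝ) := by
  have h (r : ℝ) : r ^ 2 * (1 - r ^ 2) * r ^ (2 * n) = r ^ (2 * n + 2) - r ^ (2 * n + 4) := by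
    ring
  simp_rw [h]
  rw [integral_sub (intervalIntegrable_pow _) (intervalIntegrable_pow _), integral_pow,
    integral_pow]
  field_simp
  push_cast
  ring

theorem cast_choose_add_two_two_mul_eight_le (n : ℕ) :
    ((n + 2).choose 2 : ℝ) * 8 ≤ (2 * n + 3) * (2 * n + 5) := by
  rw [Nat.cast_choose_two]
  push_cast
  nlinarith

theorem hasSum_integral_sq_mul_one_sub_sq_mul_mean_inv_norm_pow {z : ℂ} (hz : ‖z‖ < 1)
    (k : ℕ) :
    HasSum (fun n => ((n + k).choose k * ‖z‖ ^ n) ^ 2 * (2 / ((2 * n + 3) * (2 * n + 5))))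
      (∫ r in (0 : ℝ)..1, (1 / (2 * π)) * ∫ θ in (0 : ℝ)..(2 * π),
        r ^ 2 * (1 - r ^ 2) / ‖1 - z * r * exp (θ * I)‖ ^ (2 * (k + 1))) := by
  have hπ : 2 * π ≠ 0 := two_pi_pos.ne'
  have hu : Summable fun n => ((n + k).choose k * ‖z‖ ^ n : ℝ) ^ 2 :=
    (summable_mul_left_iff hπ).mp (hasSum_integral_inv_norm_one_sub_mul_exp_pow hz k).summable
  have hterm (n : ℕ) : ((n + k).choose k * ‖z‖ ^ n) ^ 2 * (2 / ((2 * n + 3) * (2 * n + 5))) =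
      ∫ r in (0 : ℝ)..1,
        ((n + k).choose k * ‖z‖ ^ n) ^ 2 * (r ^ 2 * (1 - r ^ 2) * r ^ (2 * n)) := by
    rw [intervalIntegral.integral_const_mul, integral_sq_mul_one_sub_sq_mul_pow]
  simp only [hterm]
  refine hasSum_intervalIntegral_of_norm_le (fun n => by fun_prop) hu (fun n r hr => ?_)
    (fun r hr => ?_)
  · rw [Set.uIoc_of_le zero_le_one] at hr
    have hsq : r ^ 2 ≤ 1 := pow_le_one₀ hr.1.le hr.2
    have h1 : 0 ≤ 1 - r ^ 2 := sub_nonneg.mpr hsq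
    have hpow : 0 ≤ r ^ (2 * n) := pow_nonneg hr.1.le _
    rw [Real.norm_of_nonneg (by positivity)]
    refine mul_le_of_le_one_right (by positivity) (mul_le_one₀ (mul_le_one₀ hsq h1 ?_) hpow ?_)
    · linarith [sq_nonneg r]
    · exact pow_le_one₀ hr.1.le hr.2
  · rw [Set.uIoc_of_le zero_le_one] at hr
    have hzr : ‖z * r‖ < 1 := by
      rw [norm_mul, norm_real, Real.norm_of_nonneg hr.1.le]
      exact lt_of_le_of_lt (mul_le_of_le_one_right (norm_nonneg z) hr.2) hz
    have hmean : 1 / (2 * π) * ∫ θ in (0 : ℝ)..2 * π,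
          r ^ 2 * (1 - r ^ 2) / ‖1 - z * r * exp (θ * I)‖ ^ (2 * (k + 1)) =
        r ^ 2 * (1 - r ^ 2) / (2 * π) *
          ∫ θ in (0 : ℝ)..2 * π, 1 / ‖1 - z * r * exp (θ * I)‖ ^ (2 * (k + 1)) := by
      rw [← intervalIntegral.integral_const_mul, ← intervalIntegral.integral_const_mul]
      congr 1 with θ
      ring
    rw [hmean]
    refine ((hasSum_integral_inv_norm_one_sub_mul_exp_pow hzr k).mul_left
      (r ^ 2 * (1 - r ^ 2) / (2 * π))).congr_fun fun n => ?_
    rw [norm_mul, norm_real, Real.norm_of_nonneg hr.1.le]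
    field_simp
    ring

theorem integral_double_bound (z₀ : ℝ) (hz₀0 : 0 ≤ z₀) (hz₀1 : z₀ < 1) :
    (∫ r in (0 : ℝ)..1, (1 / (2 * Real.pi)) * ∫ θ in (0 : ℝ)..(2 * Real.pi),
        r ^ 2 * (1 - r ^ 2)
          / (‖1 - (z₀ : ℂ) * (r : ℂ) * Complex.exp ((θ : ℂ) * Complex.I)‖) ^ 6)
      ≤ 1 / (4 * (1 - z₀ ^ 2) ^ 3) := by
  have hnorm : ‖(z₀ : ℂ)‖ = z₀ := by rw [norm_real, Real.norm_of_nonneg hz₀0]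
  have hz : ‖(z₀ : ℂ)‖ < 1 := by rwa [hnorm]
  have hx : ‖z₀ ^ 2‖ < 1 := by
    rw [norm_pow, Real.norm_of_nonneg hz₀0]
    exact pow_lt_one₀ hz₀0 hz₀1 two_ne_zero
  have hterm (n : ℕ) :
      ((n + 2).choose 2 * ‖(z₀ : ℂ)‖ ^ n) ^ 2 * (2 / ((2 * n + 3) * (2 * n + 5)))
        ≤ 1 / 4 * ((n + 2).choose 2 * (z₀ ^ 2) ^ n) := by
    have hden : (0 : ℝ) < (2 * n + 3) * (2 * n + 5) := by positivity
    rw [hnorm]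
    calc ((n + 2).choose 2 * z₀ ^ n) ^ 2 * (2 / ((2 * n + 3) * (2 * n + 5)))
        = (n + 2).choose 2 * (z₀ ^ 2) ^ n
            * (((n + 2).choose 2 * 8 / ((2 * n + 3) * (2 * n + 5)))) / 4 := by ring
      _ ≤ (n + 2).choose 2 * (z₀ ^ 2) ^ n * 1 / 4 := by
          gcongr
          exact (div_le_one hden).mpr (cast_choose_add_two_two_mul_eight_le n)
      _ = 1 / 4 * ((n + 2).choose 2 * (z₀ ^ 2) ^ n) := by ring
  calc _ ≤ 1 / 4 * (1 / (1 - z₀ ^ 2) ^ (2 + 1)) :=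
        hasSum_le hterm (hasSum_integral_sq_mul_one_sub_sq_mul_mean_inv_norm_pow hz 2)
          ((hasSum_choose_mul_geometric_of_norm_lt_one 2 hx).mul_left _)
    _ = 1 / (4 * (1 - z₀ ^ 2) ^ 3) := by rw [one_div_mul_one_div]
end
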